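/- arXiv:2206.10709 — 2 statements merged into one kernel-verified Lean document; each statement's English description precedes it below -/
import Mathlib

section
/- Dual fixing is valid: let m, n ∈ ℕ, A : Matrix (Fin m) (Fin n) ℝ, b : Fin m → ℝ, c : Fin n → ℝ, bounds ℓ, u : Fin n → ℝ, and an index j such that c j ≥ 0 and A i j ≥ 0 for all rows i. Suppose x : Fin n → ℝ satisfies A.mulVec x ≤ b (componentwise) and ℓ ≤ x ≤ u (componentwise). Then the vector x' obtained from x by setting x'_j := ℓ j (and x'_i := x_i for i ≠ j) also satisfies A.mulVec x' ≤ b and ℓ ≤ x' ≤ u, and Σ_i c i · x'_i ≤ Σ_i c i · x_i. In particular, if the problem min cᵀx subject to Ax ≤ b, ℓ ≤ x ≤ u has an optimal solution, it has one with x_j = ℓ j. -/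
/-- Dual fixing is valid: if `c j ≥ 0` and column `j` of `A` is nonnegative,
then replacing `x j` by its lower bound `ℓ j` in a feasible point `x`
preserves feasibility and does not increase the objective. -/
theorem dual_fix_valid (m n : ℕ) (A : Matrix (Fin m) (Fin n) ℝ)
    (b : Fin m → ℝ) (c : Fin n → ℝ) (ℓ u : Fin n → ℝ) (j : Fin n)
    (hc : 0 ≤ c j) (hA : ∀ i, 0 ≤ A i j)
    (x : Fin n → ℝ)
    (hfeas : ∀ i, A.mulVec x i ≤ b i)
    (hl : ∀ i, ℓ i ≤ x i) (hu : ∀ i, x i ≤ u i) :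
    (∀ i, A.mulVec (Function.update x j (ℓ j)) i ≤ b i) ∧
    (∀ i, ℓ i ≤ Function.update x j (ℓ j) i) ∧
    (∀ i, Function.update x j (ℓ j) i ≤ u i) ∧
    (∑ i, c i * Function.update x j (ℓ j) i ≤ ∑ i, c i * x i) := by
  have key : ∀ (w : Fin n → ℝ), 0 ≤ w j →
      ∑ k, w k * Function.update x j (ℓ j) k ≤ ∑ k, w k * x k := by
    intro w hw
    apply Finset.sum_le_sum
    intro k _
    rcases eq_or_ne k j with rfl | hk
    · simp only [Function.update_self]
      exact mul_le_mul_of_nonneg_left (hl k) hw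
    · rw [Function.update_of_ne hk]
  refine ⟨fun i => le_trans ?_ (hfeas i), fun i => ?_, fun i => ?_, ?_⟩
  · simpa [Matrix.mulVec, dotProduct] using key (A i) (hA i)
  · rcases eq_or_ne i j with rfl | h
    · simp
    · rw [Function.update_of_ne h]; exact hl i
  · rcases eq_or_ne i j with rfl | h
    · simpa using le_trans (hl i) (hu i)
    · rw [Function.update_of_ne h]; exact hu i
  · exact key c hc
end

section
/- Merging parallel columns is valid: let m, n ∈ ℕ, A : Matrix (Fin m) (Fin n) ℝ, b : Fin m → ℝ, c : Fin n → ℝ, bounds ℓ, u : Fin n → ℝ, and indices j ≠ k such that the columns of A at j and k are equal (A i j = A i k for all i) and c j = c k. Suppose x : Fin n → ℝ satisfies A.mulVec x ≤ b and ℓ ≤ x ≤ u (componentwise). Then for every real t with max(ℓ j, x j + x k − u k) ≤ t ≤ min(u j, x j + x k − ℓ k), the vector x' with x'_j := t, x'_k := x j + x k − t, and x'_i := x_i for i ∉ {j,k} satisfies A.mulVec x' ≤ b, ℓ ≤ x' ≤ u, and Σ_i c i · x'_i = Σ_i c i · x_i. In particular, only the sum x_j + x_k matters, so the two variables can be merged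 into a single variable with bounds [ℓ j + ℓ k, u j + u k]. -/
lemma parallel_cols_sum_aux (n : ℕ) (f x : Fin n → ℝ) (j k : Fin n)
    (hjk : j ≠ k) (hf : f j = f k) (t : ℝ) :
    ∑ i, f i * Function.update (Function.update x j t) k (x j + x k - t) i
      = ∑ i, f i * x i := by
  set x' := Function.update (Function.update x j t) k (x j + x k - t) with hx'
  have hxj : x' j = t := by
    simp [hx', Function.update_of_ne hjk, Function.update_self]
  have hxk : x' k = x j + x k - t := by simp [hx']
  have hother : ∀ i, i ≠ j → i ≠ k → x' i = x i := by
    intro i hij hik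
    simp [hx', Function.update_of_ne hik, Function.update_of_ne hij]
  have hsum : ∑ i, f i * x' i - ∑ i, f i * x i = ∑ i, f i * (x' i - x i) := by
    rw [← Finset.sum_sub_distrib]
    congr 1; ext i; ring
  have hzero : ∑ i, f i * (x' i - x i) = 0 := by
    rw [← Finset.sum_subset (Finset.subset_univ ({j, k} : Finset (Fin n)))]
    · rw [Finset.sum_insert (by simpa using hjk), Finset.sum_singleton,
        hxj, hxk, hf]
      ring
    · intro i _ hi
      simp only [Finset.mem_insert, Finset.mem_singleton, not_or] at hi
      rw [hother i hi.1 hi.2]; ring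
  linarith [hsum, hzero]

/-- Merging parallel columns is valid: if columns `j ≠ k` of `A` coincide and
`c j = c k`, then redistributing the sum `x j + x k` between the two
variables (within their bounds) preserves feasibility and the objective. -/
theorem parallel_cols_merge_valid (m n : ℕ) (A : Matrix (Fin m) (Fin n) ℝ)
    (b : Fin m → ℝ) (c : Fin n → ℝ) (ℓ u : Fin n → ℝ) (j k : Fin n)
    (hjk : j ≠ k) (hcol : ∀ i, A i j = A i k) (hc : c j = c k)
    (x : Fin n → ℝ)
    (hfeas : ∀ i, A.mulVec x i ≤ b i)
    (hl : ∀ i, ℓ i ≤ x i) (hu : ∀ i, x i ≤ u i)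
    (t : ℝ)
    (ht1 : max (ℓ j) (x j + x k - u k) ≤ t)
    (ht2 : t ≤ min (u j) (x j + x k - ℓ k)) :
    (∀ i, A.mulVec (Function.update (Function.update x j t) k
        (x j + x k - t)) i ≤ b i) ∧
    (∀ i, ℓ i ≤ Function.update (Function.update x j t) k
        (x j + x k - t) i) ∧
    (∀ i, Function.update (Function.update x j t) k
        (x j + x k - t) i ≤ u i) ∧
    (∑ i, c i * Function.update (Function.update x j t) k
        (x j + x k - t) i = ∑ i, c i * x i) := by
  set x' := Function.update (Function.update x j t) k (x j + x k - t) with hx'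
  have hxj : x' j = t := by
    simp [hx', Function.update_of_ne hjk, Function.update_self]
  have hxk : x' k = x j + x k - t := by simp [hx']
  have hother : ∀ i, i ≠ j → i ≠ k → x' i = x i := by
    intro i hij hik
    simp [hx', Function.update_of_ne hik, Function.update_of_ne hij]
  have h1 := le_trans (le_max_left _ _) ht1
  have h2 := le_trans (le_max_right _ _) ht1
  have h3 := le_trans ht2 (min_le_left _ _)
  have h4 := le_trans ht2 (min_le_right _ _)
  refine ⟨?_, ?_, ?_, ?_⟩
  · intro i
    have : A.mulVec x' i = A.mulVec x i := by
      simp only [Matrix.mulVec, dotProduct]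
      exact parallel_cols_sum_aux n (A i) x j k hjk (hcol i) t
    rw [this]; exact hfeas i
  · intro i
    rcases eq_or_ne i k with rfl | hik
    · rw [hxk]; linarith
    rcases eq_or_ne i j with rfl | hij
    · rw [hxj]; exact h1
    · rw [hother i hij hik]; exact hl i
  · intro i
    rcases eq_or_ne i k with rfl | hik
    · rw [hxk]; linarith
    rcases eq_or_ne i j with rfl | hij
    · rw [hxj]; exact h3
    · rw [hother i hij hik]; exact hu i
  · exact parallel_cols_sum_aux n c x j k hjk hc t
end
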